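/- For every integer k ≥ 2, the polynomial A(x) = x^k - x^{k-1} - ... - 1 has simple roots (its discriminant is nonzero, i.e., gcd(A, A') = 1 over ℂ). -/

import Mathlib

/-!
Multiplying by `X - 1` turns `A` into `B = X ^ (k + 1) - 2 * X ^ k + 1`, so a multiple root `a` of
`A` is a multiple root of `B`. From `B(a) = 0` and `a * B'(a) = (k + 1) * a ^ (k + 1) - 2k * a ^ k = 0`
one gets `2 * a ^ k = k + 1` and `(k + 1) * a = 2k`, hence `(k + 1) ^ (k + 1) = 2 ^ (k + 1) * k ^ k`.
Since `k ^ k` and `(k + 1) ^ (k + 1)` are coprime this forces `k = 1`, where `A = X - 1`.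
-/

open Polynomial Finset

/-- The characteristic polynomial of the `k`-bonacci recurrence. -/
noncomputable def kBonacciPoly (R : Type*) [CommRing R] (k : ℕ) : R[X] :=
  X ^ k - ∑ j ∈ range k, X ^ j

lemma X_sub_one_mul_kBonacciPoly (R : Type*) [CommRing R] (k : ℕ) :
    (X - 1) * kBonacciPoly R k = X ^ (k + 1) - 2 * X ^ k + 1 := by
  rw [kBonacciPoly]
  linear_combination -geom_sum_mul (X : R[X]) k

lemma mul_eval_derivative_X_pow {R : Type*} [CommRing R] (a : R) (n : ℕ) :
    a * eval a (derivative (X ^ n)) = n * a ^ n := by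
  cases n with
  | zero => simp
  | succ n => simp; ring

lemma add_one_pow_succ_eq_of_double_root {K : Type*} [Field K] [CharZero K] {k : ℕ} {a : K}
    (h : a ^ (k + 1) - 2 * a ^ k + 1 = 0) (h' : (k + 1) * a ^ (k + 1) - 2 * k * a ^ k = 0) :
    ((k : K) + 1) ^ (k + 1) = 2 ^ (k + 1) * k ^ k := by
  have hpow : 2 * a ^ k = k + 1 := by linear_combination h' - (k + 1) * h
  have hlin : (k + 1) * a = 2 * k := by
    have hk : (k : K) + 1 ≠ 0 := by exact_mod_cast k.succ_ne_zero
    refine mul_left_cancel₀ hk (sub_eq_zero.mp ?_)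
    linear_combination 2 * h' - ((k + 1) * a - 2 * k) * hpow
  calc ((k : K) + 1) ^ (k + 1) = (k + 1) ^ k * (2 * a ^ k) := by rw [hpow, pow_succ]
    _ = 2 * ((k + 1) * a) ^ k := by rw [mul_pow]; ring
    _ = 2 ^ (k + 1) * k ^ k := by rw [hlin]; ring

lemma eq_one_of_add_one_pow_succ_eq {k : ℕ} (h : (k + 1) ^ (k + 1) = 2 ^ (k + 1) * k ^ k) :
    k = 1 := by
  have hcop : Nat.Coprime (k ^ k) ((k + 1) ^ (k + 1)) :=
    .pow _ _ (Nat.coprime_self_add_right.mpr (Nat.coprime_one_right k))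
  have hdvd : k ^ k ∣ (k + 1) ^ (k + 1) := h ▸ dvd_mul_left _ _
  rcases Nat.pow_eq_one.mp (hcop.eq_one_of_dvd hdvd) with hk | rfl
  · exact hk
  · simp at h

lemma kBonacciPoly_derivative_not_isRoot {K : Type*} [Field K] [CharZero K] {k : ℕ} {a : K}
    (ha : (kBonacciPoly K k).IsRoot a) : ¬ (derivative (kBonacciPoly K k)).IsRoot a := by
  intro ha'
  have hB : a ^ (k + 1) - 2 * a ^ k + 1 = 0 := by
    simpa [ha.eq_zero] using (congrArg (eval a) (X_sub_one_mul_kBonacciPoly K k)).symm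
  have hB' : (k + 1) * a ^ (k + 1) - 2 * k * a ^ k = 0 := by
    have := congrArg (fun p => a * eval a (derivative p)) (X_sub_one_mul_kBonacciPoly K k)
    simp only [derivative_mul, derivative_add, derivative_sub, derivative_one, derivative_X,
      derivative_ofNat, eval_add, eval_sub, eval_mul, eval_X, eval_one, eval_zero, eval_ofNat,
      ha.eq_zero, ha'.eq_zero, mul_zero, zero_mul, zero_add, add_zero, mul_sub] at this
    linear_combination (norm := (push_cast; ring))
      -this + 2 * mul_eval_derivative_X_pow a k - mul_eval_derivative_X_pow a (k + 1)
  obtain rfl : k = 1 :=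
    eq_one_of_add_one_pow_succ_eq (by exact_mod_cast add_one_pow_succ_eq_of_double_root hB hB')
  simp [kBonacciPoly] at ha'

theorem stmt_3 (k : ℕ) :
    IsCoprime ((X : Polynomial ℂ) ^ k - ∑ j ∈ range k, X ^ j)
      (Polynomial.derivative ((X : Polynomial ℂ) ^ k - ∑ j ∈ range k, X ^ j)) := by
  rw [isCoprime_iff_aeval_ne_zero_of_isAlgClosed ℂ ℂ]
  intro a
  rw [or_iff_not_imp_left, not_not]
  exact kBonacciPoly_derivative_not_isRoot
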